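/- Consider the (1+1) elitist EA and a (μ+μ) elitist EA with μ ≥ 2 using the same mutation operator M on the same fitness function f, as in the model below, with S_non nonempty. Suppose the fitness landscape associated with the (1+1) EA is non-bridgeable, i.e. for any two distinct non-optimal individuals x, y ∈ S_non with f(x) ≥ f(y) one has M(x, S¹_high(x)) > M(y, S¹_high(x)). Then no superlinear ρ-scalability happens: 1 − ρ(Q^μ) ≤ μ(1 − ρ(Q¹)). -/

import Mathlib

/-!
Let `x` be a non-optimal individual minimising `m = M(x, S¹_high(x))`. Ordering the non-optimal
individuals by fitness (ties broken by the order on `S`) makes `Q¹` upper triangular, so its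
eigenvalues are its diagonal entries `1 - M(y, S¹_high(y)) ≤ 1 - m`, whence `ρ(Q¹) ≤ 1 - m`.

In the `(μ+μ)` EA, elitism keeps `x` as the best individual of a non-optimal population whose
best is `x` unless one of its `μ` mutants beats `x`; by non-bridgeability each mutant does so
with probability at most `m`. So the indicator `v` of these populations satisfies
`Q^μ v ≥ (1 - m)^μ v ≥ (1 - μ m) v`, and for a nonnegative matrix such a subinvariant vector
gives `‖(Q^μ)^k‖ ≥ (1 - μ m)^k`, hence `ρ(Q^μ) ≥ 1 - μ m` by Gelfand's formula.
-/

open Matrix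

/-- The spectral radius of a real square matrix: the maximum of the moduli of its
complex eigenvalues (`0` for an empty matrix, via `sSup ∅ = 0`). -/
noncomputable def specRad {n : Type*} [Fintype n] [DecidableEq n] (A : Matrix n n ℝ) : ℝ :=
  sSup ((fun z => ‖z‖) '' spectrum ℂ (A.map Complex.ofReal))

variable {S : Type*} [Fintype S] [LinearOrder S]

/-- `x` is an optimal individual for the fitness function `f`. -/
abbrev Sopt (f : S → ℝ) (x : S) : Prop := ∀ y, f y ≤ f x

/-- `x` is a non-optimal individual for the fitness function `f`. -/
abbrev Snon (f : S → ℝ) (x : S) : Prop := ¬ Sopt f x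

/-- `Mhigh f M x y` is the probability `M(y, S¹_high(x))` that `y` mutates into the
set of individuals strictly fitter than `x`. -/
noncomputable abbrev Mhigh (f : S → ℝ) (M : Matrix S S ℝ) (x y : S) : ℝ :=
  ∑ z ∈ Finset.univ.filter (fun z => f x < f z), M y z

/-- The transition matrix of the `(1+1)` elitist EA with mutation operator `M` and
fitness `f`: move to a strictly fitter mutant, otherwise stay put. -/
noncomputable def P1 (f : S → ℝ) (M : Matrix S S ℝ) : Matrix S S ℝ :=
  Matrix.of fun x z =>
    if f x < f z then M x z
    else if z = x then ∑ y ∈ Finset.univ.filter (fun y => f y ≤ f x), M x y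
    else 0

/-- The restriction `Q¹` of the `(1+1)` elitist EA transition matrix to the
non-optimal states. -/
noncomputable def Q1 (f : S → ℝ) (M : Matrix S S ℝ) :
    Matrix {x : S // Snon f x} {x : S // Snon f x} ℝ :=
  Matrix.of fun a b => P1 f M a.1 b.1

/-- The transition matrix `P^μ` of the `(μ+μ)` EA with mutation operator `M` and
selection operator `PS`: mutate each individual independently, then select. -/
noncomputable def Pmu {μ : ℕ} (M : Matrix S S ℝ)
    (PS : (Fin μ → S) → (Fin μ → S) → (Fin μ → S) → ℝ) :
    Matrix (Fin μ → S) (Fin μ → S) ℝ :=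
  Matrix.of fun X Z => ∑ Y : Fin μ → S, (∏ i, M (X i) (Y i)) * PS X Y Z

/-- The restriction `Q^μ` of the `(μ+μ)` EA transition matrix to the set `S^μ_non` of
populations containing no optimal individual. -/
noncomputable def Qmu {μ : ℕ} (f : S → ℝ) (M : Matrix S S ℝ)
    (PS : (Fin μ → S) → (Fin μ → S) → (Fin μ → S) → ℝ) :
    Matrix {X : Fin μ → S // ∀ i, Snon f (X i)} {X : Fin μ → S // ∀ i, Snon f (X i)} ℝ :=
  Matrix.of fun A B => Pmu M PS A.1 B.1

open Polynomial in
theorem Matrix.BlockTriangular.exists_eq_diag_of_mem_spectrum {n α K : Type*} [Fintype n]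
    [DecidableEq n] [LinearOrder α] [Field K] {A : Matrix n n K} {b : n → α}
    (hA : A.BlockTriangular b) (hb : Function.Injective b) {z : K} (hz : z ∈ spectrum K A) :
    ∃ i, z = A i i := by
  let _ : LinearOrder n := LinearOrder.lift' b hb
  rw [mem_spectrum_iff_isRoot_charpoly, IsRoot, charpoly_of_isUpperTriangular A hA, eval_prod,
    Finset.prod_eq_zero_iff] at hz
  obtain ⟨i, -, hi⟩ := hz
  exact ⟨i, sub_eq_zero.1 (by simpa using hi)⟩

open Filter in
theorem ofReal_le_spectralRadius_of_pow_le_norm_pow {A : Type*} [NormedRing A] [NormedAlgebra ℂ A]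
    [CompleteSpace A] {a : A} {r : ℝ} (hr : 0 ≤ r) (h : ∀ k : ℕ, r ^ k ≤ ‖a ^ k‖) :
    ENNReal.ofReal r ≤ spectralRadius ℂ a := by
  refine ge_of_tendsto (spectrum.pow_nnnorm_pow_one_div_tendsto_nhds_spectralRadius a) ?_
  filter_upwards [eventually_ne_atTop 0] with k hk
  have hroot : ENNReal.ofReal r = (ENNReal.ofReal r ^ k) ^ (1 / (k : ℝ)) := by
    rw [← ENNReal.rpow_natCast, ← ENNReal.rpow_mul, mul_one_div_cancel (by exact_mod_cast hk),
      ENNReal.rpow_one]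
  rw [hroot, ← ENNReal.ofReal_pow hr, ← ENNReal.ofReal_coe_nnreal, coe_nnnorm]
  exact ENNReal.rpow_le_rpow (ENNReal.ofReal_le_ofReal (h k)) (by positivity)

theorem mulVec_le_mulVec_of_nonneg {m n : Type*} [Fintype n] {A : Matrix m n ℝ}
    (hA : ∀ i j, 0 ≤ A i j) {u v : n → ℝ} (huv : u ≤ v) : A *ᵥ u ≤ A *ᵥ v := fun i =>
  Finset.sum_le_sum fun j _ => mul_le_mul_of_nonneg_left (huv j) (hA i j)

section SpectralRadius

variable {n : Type*} [Fintype n] [DecidableEq n]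

theorem specRad_nonneg (A : Matrix n n ℝ) : 0 ≤ specRad A :=
  Real.sSup_nonneg (by rintro _ ⟨z, -, rfl⟩; exact norm_nonneg z)

theorem specRad_le_of_forall_norm_le {A : Matrix n n ℝ} {r : ℝ} (hr : 0 ≤ r)
    (h : ∀ z ∈ spectrum ℂ (A.map Complex.ofReal), ‖z‖ ≤ r) : specRad A ≤ r :=
  Real.sSup_le (by rintro _ ⟨z, hz, rfl⟩; exact h z hz) hr

theorem spectralRadius_map_ofReal_le (A : Matrix n n ℝ) :
    spectralRadius ℂ (A.map Complex.ofReal) ≤ ENNReal.ofReal (specRad A) := by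
  refine iSup₂_le fun z hz => ?_
  rw [← ENNReal.ofReal_coe_nnreal, coe_nnnorm]
  refine ENNReal.ofReal_le_ofReal (le_csSup ?_ ⟨z, hz, rfl⟩)
  exact ((A.map Complex.ofReal).finite_spectrum.image _).bddAbove

theorem pow_smul_le_pow_mulVec {A : Matrix n n ℝ} (hA : ∀ i j, 0 ≤ A i j) {v : n → ℝ} {r : ℝ}
    (hr : 0 ≤ r) (h : r • v ≤ A *ᵥ v) (k : ℕ) : r ^ k • v ≤ (A ^ k) *ᵥ v := by
  induction k with
  | zero => simp
  | succ k ih =>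
    calc r ^ (k + 1) • v = r ^ k • r • v := by rw [pow_succ, mul_smul]
      _ ≤ r ^ k • (A *ᵥ v) := smul_le_smul_of_nonneg_left h (pow_nonneg hr k)
      _ = A *ᵥ (r ^ k • v) := (mulVec_smul A _ v).symm
      _ ≤ A *ᵥ ((A ^ k) *ᵥ v) := mulVec_le_mulVec_of_nonneg hA ih
      _ = (A ^ (k + 1)) *ᵥ v := by rw [mulVec_mulVec, pow_succ']

attribute [local instance] Matrix.linftyOpNormedRing Matrix.linftyOpNormedAlgebra in
theorem le_specRad_of_smul_le_mulVec {A : Matrix n n ℝ} (hA : ∀ i j, 0 ≤ A i j) {v : n → ℝ}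
    (hv0 : 0 ≤ v) (hv : v ≠ 0) {r : ℝ} (h : r • v ≤ A *ᵥ v) : r ≤ specRad A := by
  rcases lt_or_ge r 0 with hr | hr
  · exact hr.le.trans (specRad_nonneg A)
  have hpow : ∀ k : ℕ, r ^ k ≤ ‖A.map Complex.ofReal ^ k‖ := by
    intro k
    have hsmul : ‖r ^ k • v‖ ≤ ‖(A ^ k) *ᵥ v‖ := by
      refine (pi_norm_le_iff_of_nonneg (norm_nonneg _)).2 fun i => ?_
      refine le_trans ?_ (norm_le_pi_norm _ i)
      have hi := pow_smul_le_pow_mulVec hA hr h k i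
      have hvi : 0 ≤ (r ^ k • v) i := smul_nonneg (pow_nonneg hr k) (hv0 i)
      rw [Real.norm_of_nonneg hvi, Real.norm_of_nonneg (hvi.trans hi)]
      exact hi
    have hnorm : ‖A.map Complex.ofReal ^ k‖ = ‖A ^ k‖ := by
      change ‖A.map Complex.ofRealHom ^ k‖ = _
      rw [← Matrix.map_pow A Complex.ofRealHom]
      simp [linfty_opNorm_def]
    rw [hnorm, ← mul_le_mul_iff_left₀ (norm_pos_iff.2 hv)]
    calc r ^ k * ‖v‖ = ‖r ^ k • v‖ := by rw [norm_smul, Real.norm_of_nonneg (pow_nonneg hr k)]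
      _ ≤ ‖(A ^ k) *ᵥ v‖ := hsmul
      _ ≤ ‖A ^ k‖ * ‖v‖ := linfty_opNorm_mulVec _ _
  have := (ofReal_le_spectralRadius_of_pow_le_norm_pow hr hpow).trans
    (spectralRadius_map_ofReal_le A)
  rwa [ENNReal.ofReal_le_ofReal_iff (specRad_nonneg A)] at this

end SpectralRadius

section Mutation

variable {α : Type*} [Fintype α] [DecidableEq α] {f : α → ℝ} {M : Matrix α α ℝ}

theorem sum_fitness_le_eq_one_sub_Mhigh (hM : M ∈ rowStochastic ℝ α) (x y : α) :
    ∑ z ∈ Finset.univ.filter (fun z => f z ≤ f x), M y z = 1 - Mhigh f M x y := by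
  rw [← sum_row_of_mem_rowStochastic hM y,
    ← Finset.sum_filter_add_sum_filter_not Finset.univ (fun z => f x < f z)]
  simp only [not_lt, add_sub_cancel_left]

theorem Mhigh_le_one (hM : M ∈ rowStochastic ℝ α) (x y : α) : Mhigh f M x y ≤ 1 := by
  have := sum_fitness_le_eq_one_sub_Mhigh (f := f) hM x y
  have : 0 ≤ ∑ z ∈ Finset.univ.filter (fun z => f z ≤ f x), M y z :=
    Finset.sum_nonneg fun _ _ => nonneg_of_mem_rowStochastic hM
  linarith

theorem sum_piFinset_prod_eq_prod_one_sub_Mhigh {μ : ℕ} (hM : M ∈ rowStochastic ℝ α) (x : α)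
    (X : Fin μ → α) :
    ∑ Y ∈ Fintype.piFinset (fun _ => Finset.univ.filter (fun y => f y ≤ f x)),
      ∏ i, M (X i) (Y i) = ∏ i, (1 - Mhigh f M x (X i)) := by
  rw [← Finset.prod_univ_sum]
  exact Finset.prod_congr rfl fun i _ => sum_fitness_le_eq_one_sub_Mhigh hM x (X i)

end Mutation

section OnePlusOne

variable {α : Type*} [Fintype α] [LinearOrder α] {f : α → ℝ} {M : Matrix α α ℝ}

theorem Q1_apply_self (hM : M ∈ rowStochastic ℝ α) (a : {x : α // Snon f x}) :
    Q1 f M a a = 1 - Mhigh f M a a := by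
  simpa [Q1, P1] using sum_fitness_le_eq_one_sub_Mhigh hM a.1 a.1

theorem Q1_blockTriangular :
    (Q1 f M).BlockTriangular fun a : {x : α // Snon f x} => toLex (f a.1, a) := by
  intro a b hba
  have hne : b.1 ≠ a.1 := fun h => hba.ne (by rw [Subtype.ext h])
  have hnlt : ¬ f a.1 < f b.1 := by
    rcases Prod.Lex.toLex_lt_toLex.1 hba with h | ⟨h, -⟩ <;> exact h.not_gt
  simp [Q1, P1, hnlt, hne]

theorem specRad_Q1_le (hM : M ∈ rowStochastic ℝ α) {x : α}
    (hmin : ∀ y, Snon f y → Mhigh f M x x ≤ Mhigh f M y y) :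
    specRad (Q1 f M) ≤ 1 - Mhigh f M x x := by
  refine specRad_le_of_forall_norm_le (sub_nonneg.2 (Mhigh_le_one hM x x)) fun z hz => ?_
  have htri := (Q1_blockTriangular (f := f) (M := M)).map Complex.ofRealHom
  obtain ⟨a, rfl⟩ := htri.exists_eq_diag_of_mem_spectrum
    (toLex.injective.comp fun a b h => (Prod.ext_iff.1 h).2) hz
  have := hmin a.1 a.2
  have := Mhigh_le_one (f := f) hM a.1 a.1
  simp only [map_apply, Complex.ofRealHom_eq_coe, Complex.norm_real, Real.norm_eq_abs,
    Q1_apply_self hM]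
  rw [abs_le]
  constructor <;> linarith

end OnePlusOne

section Selection

variable {α : Type*} [Fintype α] {f : α → ℝ} {μ : ℕ} {best : (Fin μ → α) → α}
  {PS : (Fin μ → α) → (Fin μ → α) → (Fin μ → α) → ℝ}

structure IsElitistSelection (f : α → ℝ) (best : (Fin μ → α) → α)
    (PS : (Fin μ → α) → (Fin μ → α) → (Fin μ → α) → ℝ) : Prop where
  nonneg : ∀ X Y Z, 0 ≤ PS X Y Z
  sum_eq_one : ∀ X Y, ∑ Z, PS X Y Z = 1
  mem_of_pos : ∀ X Y Z, 0 < PS X Y Z → ∀ i, (∃ j, Z i = X j) ∨ (∃ j, Z i = Y j)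
  best_eq_of_pos : ∀ X Y Z, 0 < PS X Y Z →
    (f (best X) < f (best Y) → best Z = best Y) ∧ (¬ f (best X) < f (best Y) → best Z = best X)

namespace IsElitistSelection

theorem nonopt_and_best_eq_of_pos (hPS : IsElitistSelection f best PS)
    (hbest_mem : ∀ X, ∃ i, best X = X i) {x : α} {X Y Z : Fin μ → α}
    (hX : ∀ i, Snon f (X i)) (hbX : best X = x) (hY : ∀ i, f (Y i) ≤ f x)
    (hpos : 0 < PS X Y Z) : (∀ i, Snon f (Z i)) ∧ best Z = x := by
  have hx : Snon f x := hbX ▸ (hbest_mem X).elim fun i hi => hi ▸ hX i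
  refine ⟨fun i => ?_, ?_⟩
  · rcases hPS.mem_of_pos X Y Z hpos i with ⟨j, hj⟩ | ⟨j, hj⟩
    · exact hj ▸ hX j
    · exact hj ▸ fun hopt => hx fun z => (hopt z).trans (hY j)
  · have hbY : ¬ f (best X) < f (best Y) := by
      obtain ⟨i, hi⟩ := hbest_mem Y
      rw [hbX, hi, not_lt]
      exact hY i
    rw [(hPS.best_eq_of_pos X Y Z hpos).2 hbY, hbX]

theorem sum_indicator_best_eq_one [DecidableEq α] (hPS : IsElitistSelection f best PS)
    (hbest_mem : ∀ X, ∃ i, best X = X i) {x : α} {X Y : Fin μ → α}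
    (hX : ∀ i, Snon f (X i)) (hbX : best X = x) (hY : ∀ i, f (Y i) ≤ f x) :
    ∑ B : {Z : Fin μ → α // ∀ i, Snon f (Z i)},
      PS X Y B.1 * (if best B.1 = x then 1 else 0) = 1 := by
  have hsupp : ∀ Z, PS X Y Z ≠ 0 → (∀ i, Snon f (Z i)) ∧ best Z = x := fun Z hZ =>
    hPS.nonopt_and_best_eq_of_pos hbest_mem hX hbX hY ((hPS.nonneg X Y Z).lt_of_ne' hZ)
  refine (Fintype.sum_of_injective Subtype.val Subtype.val_injective _ _ ?_ fun B => ?_).trans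
    (hPS.sum_eq_one X Y)
  · intro Z hZ
    by_contra hne
    exact hZ ⟨⟨Z, (hsupp Z hne).1⟩, rfl⟩
  · split_ifs with hB
    · rw [mul_one]
    · rw [mul_zero, eq_comm]
      by_contra hne
      exact hB (hsupp B.1 hne).2

end IsElitistSelection

end Selection

section MuPlusMu

variable {α : Type*} [Fintype α] [DecidableEq α] {f : α → ℝ} {M : Matrix α α ℝ} {μ : ℕ}
  {best : (Fin μ → α) → α} {PS : (Fin μ → α) → (Fin μ → α) → (Fin μ → α) → ℝ}

theorem Qmu_nonneg (hM : M ∈ rowStochastic ℝ α) (hPS : IsElitistSelection f best PS)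
    (A B : {X : Fin μ → α // ∀ i, Snon f (X i)}) : 0 ≤ Qmu f M PS A B :=
  Finset.sum_nonneg fun _ _ =>
    mul_nonneg (Finset.prod_nonneg fun _ _ => nonneg_of_mem_rowStochastic hM) (hPS.nonneg _ _ _)

theorem one_sub_mul_le_Qmu_mulVec_indicator_best (hM : M ∈ rowStochastic ℝ α)
    (hPS : IsElitistSelection f best PS) (hbest_mem : ∀ X, ∃ i, best X = X i)
    (hbest_max : ∀ X i, f (X i) ≤ f (best X)) {x : α}
    (hdom : ∀ y, Snon f y → f y ≤ f x → Mhigh f M x y ≤ Mhigh f M x x)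
    (A : {X : Fin μ → α // ∀ i, Snon f (X i)}) (hA : best A.1 = x) :
    1 - μ * Mhigh f M x x ≤ (Qmu f M PS *ᵥ fun B => if best B.1 = x then 1 else 0) A := by
  set m := Mhigh f M x x
  set G := Fintype.piFinset fun _ : Fin μ => Finset.univ.filter (fun y => f y ≤ f x)
  have hprob : ∀ Y : Fin μ → α, 0 ≤ ∏ i, M (A.1 i) (Y i) := fun Y =>
    Finset.prod_nonneg fun _ _ => nonneg_of_mem_rowStochastic hM
  have hstay : ∀ Y ∈ G, ∑ B : {X : Fin μ → α // ∀ i, Snon f (X i)},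
      PS A.1 Y B.1 * (if best B.1 = x then 1 else 0) = 1 := fun Y hY =>
    hPS.sum_indicator_best_eq_one hbest_mem A.2 hA fun i =>
      (Finset.mem_filter.1 (Fintype.mem_piFinset.1 hY i)).2
  have hdomA : ∀ i, 1 - m ≤ 1 - Mhigh f M x (A.1 i) := fun i =>
    sub_le_sub_left (hdom _ (A.2 i) (hA ▸ hbest_max A.1 i)) 1
  calc 1 - μ * m = 1 + μ * (-m) := by ring
    _ ≤ (1 + (-m)) ^ μ := one_add_mul_le_pow (by linarith [Mhigh_le_one (f := f) hM x x]) μ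
    _ = ∏ _i : Fin μ, (1 - m) := by rw [Finset.prod_const, Finset.card_univ, Fintype.card_fin,
          ← sub_eq_add_neg]
    _ ≤ ∏ i, (1 - Mhigh f M x (A.1 i)) := Finset.prod_le_prod
          (fun _ _ => sub_nonneg.2 (Mhigh_le_one hM x x)) fun i _ => hdomA i
    _ = ∑ Y ∈ G, ∏ i, M (A.1 i) (Y i) := (sum_piFinset_prod_eq_prod_one_sub_Mhigh hM x A.1).symm
    _ = ∑ Y ∈ G, (∏ i, M (A.1 i) (Y i)) * ∑ B : {X : Fin μ → α // ∀ i, Snon f (X i)},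
          PS A.1 Y B.1 * (if best B.1 = x then 1 else 0) :=
        Finset.sum_congr rfl fun Y hY => by rw [hstay Y hY, mul_one]
    _ ≤ ∑ Y, (∏ i, M (A.1 i) (Y i)) * ∑ B : {X : Fin μ → α // ∀ i, Snon f (X i)},
          PS A.1 Y B.1 * (if best B.1 = x then 1 else 0) :=
        Finset.sum_le_sum_of_subset_of_nonneg (Finset.subset_univ G) fun Y _ _ =>
          mul_nonneg (hprob Y) (Finset.sum_nonneg fun B _ =>
            mul_nonneg (hPS.nonneg _ _ _) (by split_ifs <;> norm_num))
    _ = _ := by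
        simp only [mulVec, dotProduct, Qmu, Pmu, of_apply, Finset.mul_sum, Finset.sum_mul,
          mul_assoc]
        exact Finset.sum_comm

theorem one_sub_mul_le_specRad_Qmu (hM : M ∈ rowStochastic ℝ α)
    (hPS : IsElitistSelection f best PS) (hbest_mem : ∀ X, ∃ i, best X = X i)
    (hbest_max : ∀ X i, f (X i) ≤ f (best X)) {x : α} (hx : Snon f x)
    (hdom : ∀ y, Snon f y → f y ≤ f x → Mhigh f M x y ≤ Mhigh f M x x) :
    1 - μ * Mhigh f M x x ≤ specRad (Qmu f M PS) := by
  have hconst : best (fun _ => x) = x := (hbest_mem _).elim fun _ h => h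
  have hind_nonneg : ∀ B : {X : Fin μ → α // ∀ i, Snon f (X i)},
      0 ≤ (if best B.1 = x then (1 : ℝ) else 0) := fun B => by split_ifs <;> norm_num
  refine le_specRad_of_smul_le_mulVec (v := fun B => if best B.1 = x then 1 else 0)
    (Qmu_nonneg hM hPS) hind_nonneg
    (Function.ne_iff.2 ⟨⟨fun _ => x, fun _ => hx⟩, by simp [hconst]⟩) fun A => ?_
  by_cases hA : best A.1 = x
  · simpa [hA] using one_sub_mul_le_Qmu_mulVec_indicator_best hM hPS hbest_mem hbest_max hdom A hA
  · calc _ = (Qmu f M PS *ᵥ 0) A := by simp [hA]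
      _ ≤ _ := mulVec_le_mulVec_of_nonneg (Qmu_nonneg hM hPS) hind_nonneg A

end MuPlusMu

theorem stmt_12_general (f : S → ℝ) (M : Matrix S S ℝ)
    (hM0 : ∀ x y, 0 ≤ M x y) (hM1 : ∀ x, ∑ y, M x y = 1)
    (μ : ℕ)
    (best : (Fin μ → S) → S)
    (hbest_mem : ∀ X, ∃ i, best X = X i)
    (hbest_max : ∀ X i, f (X i) ≤ f (best X))
    (PS : (Fin μ → S) → (Fin μ → S) → (Fin μ → S) → ℝ)
    (hPS0 : ∀ X Y Z, 0 ≤ PS X Y Z)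
    (hPS1 : ∀ X Y, ∑ Z : Fin μ → S, PS X Y Z = 1)
    (hPS_src : ∀ X Y Z, 0 < PS X Y Z → ∀ i, (∃ j, Z i = X j) ∨ (∃ j, Z i = Y j))
    (hPS_elite : ∀ X Y Z, 0 < PS X Y Z →
      (f (best X) < f (best Y) → best Z = best Y) ∧
      (¬ f (best X) < f (best Y) → best Z = best X))
    (hSnon : ∃ x : S, Snon f x)
    (hnonbridge : ∀ x y : S, Snon f x → Snon f y → x ≠ y → f y ≤ f x →
      Mhigh f M x y < Mhigh f M x x) :
    1 - specRad (Qmu f M PS) ≤ (μ : ℝ) * (1 - specRad (Q1 f M)) := by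
  have hM : M ∈ rowStochastic ℝ S := mem_rowStochastic_iff_sum.2 ⟨hM0, hM1⟩
  have hPS : IsElitistSelection f best PS := ⟨hPS0, hPS1, hPS_src, hPS_elite⟩
  obtain ⟨x₀, hx₀⟩ := hSnon
  obtain ⟨x, hx, hmin⟩ := Finset.exists_min_image (Finset.univ.filter (Snon f))
    (fun y => Mhigh f M y y) ⟨x₀, by simpa using hx₀⟩
  simp only [Finset.mem_filter, Finset.mem_univ, true_and] at hx hmin
  have hdom : ∀ y, Snon f y → f y ≤ f x → Mhigh f M x y ≤ Mhigh f M x x := fun y hy hyx => by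
    rcases eq_or_ne x y with rfl | hxy
    · rfl
    · exact (hnonbridge x y hx hy hxy hyx).le
  have hQ1 := specRad_Q1_le hM hmin
  have hQmu := one_sub_mul_le_specRad_Qmu hM hPS hbest_mem hbest_max hx hdom
  calc 1 - specRad (Qmu f M PS) ≤ μ * Mhigh f M x x := by linarith
    _ ≤ μ * (1 - specRad (Q1 f M)) := by gcongr; linarith

/-- for a `(1+1)` elitist EA and a `(μ+μ)` elitist EA (`μ ≥ 2`) with the
same mutation operator `M` on the same fitness function `f`, `S_non ≠ ∅`: if the
fitness landscape of the `(1+1)` EA is non-bridgeable (for distinct non-optimal `x, y`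
with `f x ≥ f y` one has `M(x, S¹_high(x)) > M(y, S¹_high(x))`), then no superlinear
ρ-scalability happens: `1 - ρ(Q^μ) ≤ μ(1 - ρ(Q¹))`. -/
theorem stmt_12 (f : S → ℝ) (M : Matrix S S ℝ)
    (hM0 : ∀ x y, 0 ≤ M x y) (hM1 : ∀ x, ∑ y, M x y = 1)
    (μ : ℕ) (hμ : 2 ≤ μ)
    (best : (Fin μ → S) → S)
    (hbest_mem : ∀ X, ∃ i, best X = X i)
    (hbest_max : ∀ X i, f (X i) ≤ f (best X))
    (hbest_tie : ∀ X i, f (X i) = f (best X) → X i ≤ best X)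
    (PS : (Fin μ → S) → (Fin μ → S) → (Fin μ → S) → ℝ)
    (hPS0 : ∀ X Y Z, 0 ≤ PS X Y Z)
    (hPS1 : ∀ X Y, ∑ Z : Fin μ → S, PS X Y Z = 1)
    (hPS_src : ∀ X Y Z, 0 < PS X Y Z → ∀ i, (∃ j, Z i = X j) ∨ (∃ j, Z i = Y j))
    (hPS_elite : ∀ X Y Z, 0 < PS X Y Z →
      (f (best X) < f (best Y) → best Z = best Y) ∧
      (¬ f (best X) < f (best Y) → best Z = best X))
    (hSnon : ∃ x : S, Snon f x)
    (hnonbridge : ∀ x y : S, Snon f x → Snon f y → x ≠ y → f y ≤ f x →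
      Mhigh f M x y < Mhigh f M x x) :
    1 - specRad (Qmu f M PS) ≤ (μ : ℝ) * (1 - specRad (Q1 f M)) :=
  stmt_12_general f M hM0 hM1 μ best hbest_mem hbest_max PS hPS0 hPS1 hPS_src hPS_elite hSnon
    hnonbridge
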